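/- arXiv:2509.19554 — 2 statements merged into one kernel-verified Lean document; each statement's English description precedes it below -/
import Mathlib

section
/- Under the same setting, the bias term can also be bounded using the L1 norm: E_D[(R_tar(f,D) - R(f))²] ≤ (1/n) Var_x[q_tar(x)ᵀL(f(x))] + ℓ² (E_x ‖q_tar(x) - q*(x)‖₁)². -/
open MeasureTheory ProbabilityTheory

/-!
The empirical risk is a sample mean, so its mean squared error around the constant `R(f)` splits
into its variance, which independence reduces to `Var_x[q_tarᵀL] / n`, plus the squared bias
`(E_x[q_tarᵀL] - E_x[q*ᵀL])²`. Pointwise `|(q_tar - q*)ᵀL| ≤ ℓ ‖q_tar - q*‖₁` (Hölder), and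
integrating bounds the bias by `ℓ E_x‖q_tar - q*‖₁`.
-/

section MeanSquaredError

variable {Ω α : Type*} [MeasurableSpace Ω] [MeasurableSpace α] {P : Measure Ω} {μ : Measure α}

theorem integral_comp_of_measurePreserving {X : Ω → α}
    (hX : MeasurePreserving X P μ) {g : α → ℝ} (hg : AEStronglyMeasurable g μ) :
    ∫ ω, g (X ω) ∂P = ∫ x, g x ∂μ := by
  rw [← hX.map_eq] at hg ⊢
  exact (integral_map hX.aemeasurable hg).symm

theorem variance_sum_comp_of_iIndepFun {ι : Type*} [Fintype ι] {X : ι → Ω → α}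
    (hX : ∀ i, MeasurePreserving (X i) P μ) (hindep : iIndepFun X P) {g : α → ℝ}
    (hg_meas : Measurable g) (hg : MemLp g 2 μ) :
    variance (fun ω => ∑ i, g (X i ω)) P = Fintype.card ι * variance g μ := by
  have hgX : ∀ i, MemLp (fun ω => g (X i ω)) 2 P := fun i => hg.comp_measurePreserving (hX i)
  have hsum := IndepFun.variance_sum (s := Finset.univ) (fun i _ => hgX i)
    (fun i _ j _ hij => (hindep.indepFun hij).comp hg_meas hg_meas)
  simp only [Finset.sum_fn] at hsum
  rw [hsum]
  simp [(hX _).variance_fun_comp hg_meas.aemeasurable]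

theorem integral_sub_const_sq_eq_variance_add [IsProbabilityMeasure P] {S : Ω → ℝ}
    (hS : MemLp S 2 P) (c : ℝ) :
    ∫ ω, (S ω - c) ^ 2 ∂P = variance S P + (∫ ω, S ω ∂P - c) ^ 2 := by
  have hSc : MemLp (fun ω => S ω - c) 2 P := hS.sub (memLp_const c)
  rw [← variance_sub_const hS.aestronglyMeasurable c, variance_eq_sub hSc,
    integral_sub (hS.integrable one_le_two) (integrable_const c)]
  simp

theorem integral_sampleMean_sub_const_sq [IsProbabilityMeasure P] {ι : Type*} [Fintype ι]
    [Nonempty ι] {X : ι → Ω → α} (hX : ∀ i, MeasurePreserving (X i) P μ)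
    (hindep : iIndepFun X P) {g : α → ℝ} (hg_meas : Measurable g) (hg : MemLp g 2 μ) (c : ℝ) :
    ∫ ω, ((Fintype.card ι : ℝ)⁻¹ * ∑ i, g (X i ω) - c) ^ 2 ∂P
      = (Fintype.card ι : ℝ)⁻¹ * variance g μ + (∫ x, g x ∂μ - c) ^ 2 := by
  have hgX : ∀ i, MemLp (fun ω => g (X i ω)) 2 P := fun i => hg.comp_measurePreserving (hX i)
  have hsum : MemLp (fun ω => ∑ i, g (X i ω)) 2 P := memLp_finsetSum _ fun i _ => hgX i
  have hcard : (Fintype.card ι : ℝ) ≠ 0 := by positivity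
  rw [integral_sub_const_sq_eq_variance_add (hsum.const_mul _), variance_const_mul,
    variance_sum_comp_of_iIndepFun hX hindep hg_meas hg, integral_const_mul,
    integral_finsetSum _ fun i _ => (hgX i).integrable one_le_two]
  simp only [integral_comp_of_measurePreserving (hX _) hg.aestronglyMeasurable,
    Finset.sum_const, Finset.card_univ, nsmul_eq_mul]
  field_simp

theorem abs_integral_sub_integral_le {f g b : α → ℝ} (hf : Integrable f μ) (hg : Integrable g μ)
    (hb : Integrable b μ) (hfg : ∀ᵐ x ∂μ, |f x - g x| ≤ b x) :
    |∫ x, f x ∂μ - ∫ x, g x ∂μ| ≤ ∫ x, b x ∂μ := by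
  rw [← integral_sub hf hg]
  exact norm_integral_le_of_norm_le (f := fun x => f x - g x) hb hfg

end MeanSquaredError

section WeightedLoss

variable {ι : Type*} [Fintype ι]

theorem sum_mul_mem_Icc_of_sum_eq_one {q L : ι → ℝ} {ℓ : ℝ} (hq : ∀ k, 0 ≤ q k)
    (hq_sum : ∑ k, q k = 1) (hL : ∀ k, L k ∈ Set.Icc 0 ℓ) :
    ∑ k, q k * L k ∈ Set.Icc 0 ℓ :=
  (convex_Icc 0 ℓ).sum_mem (fun k _ => hq k) hq_sum fun k _ => hL k

theorem abs_sum_mul_sub_sum_mul_le {q q' L : ι → ℝ} {ℓ : ℝ} (hL : ∀ k, |L k| ≤ ℓ) :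
    |∑ k, q k * L k - ∑ k, q' k * L k| ≤ ℓ * ∑ k, |q k - q' k| := by
  rw [← Finset.sum_sub_distrib, Finset.mul_sum]
  refine (Finset.abs_sum_le_sum_abs _ _).trans (Finset.sum_le_sum fun k _ => ?_)
  rw [← sub_mul, abs_mul, mul_comm]
  exact mul_le_mul_of_nonneg_right (hL k) (abs_nonneg _)

theorem sum_abs_sub_le_two {q q' : ι → ℝ} (hq : ∀ k, 0 ≤ q k) (hq_sum : ∑ k, q k = 1)
    (hq' : ∀ k, 0 ≤ q' k) (hq'_sum : ∑ k, q' k = 1) :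
    ∑ k, |q k - q' k| ≤ 2 :=
  calc ∑ k, |q k - q' k| ≤ ∑ k, (q k + q' k) := Finset.sum_le_sum fun k _ => by
        simpa only [abs_of_nonneg (hq k), abs_of_nonneg (hq' k)] using abs_sub (q k) (q' k)
    _ = 2 := by rw [Finset.sum_add_distrib, hq_sum, hq'_sum]; norm_num

end WeightedLoss

theorem risk_estimate_bound_l1_general {Ω α : Type*} [MeasurableSpace Ω] [MeasurableSpace α]
    (P : Measure Ω) [IsProbabilityMeasure P] (μ : Measure α) [IsProbabilityMeasure μ]
    (n K : ℕ) (hn : 0 < n)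
    (X : Fin n → Ω → α) (hXmeas : ∀ i, Measurable (X i))
    (hiid : iIndepFun X P)
    (hdist : ∀ i, P.map (X i) = μ)
    (ℓ : ℝ)
    (qtar qstar L : α → Fin K → ℝ)
    (hqtar_meas : ∀ k, Measurable fun x => qtar x k)
    (hqstar_meas : ∀ k, Measurable fun x => qstar x k)
    (hL_meas : ∀ k, Measurable fun x => L x k)
    (hqtar_nonneg : ∀ x k, 0 ≤ qtar x k) (hqtar_sum : ∀ x, ∑ k, qtar x k = 1)
    (hqstar_nonneg : ∀ x k, 0 ≤ qstar x k) (hqstar_sum : ∀ x, ∑ k, qstar x k = 1)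
    (hLbound : ∀ x k, L x k ∈ Set.Icc (0 : ℝ) ℓ) :
    ∫ ω, ((n : ℝ)⁻¹ * (∑ i, ∑ k, qtar (X i ω) k * L (X i ω) k)
        - ∫ x, ∑ k, qstar x k * L x k ∂μ) ^ 2 ∂P
      ≤ (n : ℝ)⁻¹ * variance (fun x => ∑ k, qtar x k * L x k) μ
        + ℓ ^ 2 * (∫ x, ∑ k, |qtar x k - qstar x k| ∂μ) ^ 2 := by
  have : Nonempty (Fin n) := ⟨⟨0, hn⟩⟩
  have hbounded (q : α → Fin K → ℝ) (hq : ∀ x k, 0 ≤ q x k) (hq_sum : ∀ x, ∑ k, q x k = 1)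
      (hq_meas : ∀ k, Measurable fun x => q x k) (p : ENNReal) :
      MemLp (fun x => ∑ k, q x k * L x k) p μ :=
    memLp_of_bounded
      (ae_of_all μ fun x => sum_mul_mem_Icc_of_sum_eq_one (hq x) (hq_sum x) (hLbound x))
      (by fun_prop) p
  have htar := hbounded qtar hqtar_nonneg hqtar_sum hqtar_meas
  have hdist_int : Integrable (fun x => ∑ k, |qtar x k - qstar x k|) μ :=
    (memLp_of_bounded (a := 0) (b := 2) (ae_of_all μ fun x =>
      ⟨by positivity, sum_abs_sub_le_two (hqtar_nonneg x) (hqtar_sum x) (hqstar_nonneg x)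
        (hqstar_sum x)⟩) (by fun_prop) 1).integrable le_rfl
  have hbias : |∫ x, ∑ k, qtar x k * L x k ∂μ - ∫ x, ∑ k, qstar x k * L x k ∂μ|
      ≤ ℓ * ∫ x, ∑ k, |qtar x k - qstar x k| ∂μ := by
    rw [← integral_const_mul]
    refine abs_integral_sub_integral_le ((htar 1).integrable le_rfl)
      ((hbounded qstar hqstar_nonneg hqstar_sum hqstar_meas 1).integrable le_rfl)
      (hdist_int.const_mul ℓ) (ae_of_all μ fun x => abs_sum_mul_sub_sum_mul_le fun k => ?_)
    exact (abs_of_nonneg (hLbound x k).1).trans_le (hLbound x k).2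
  have hmse := integral_sampleMean_sub_const_sq (fun i => ⟨hXmeas i, hdist i⟩) hiid
    (by fun_prop) (htar 2) (∫ x, ∑ k, qstar x k * L x k ∂μ)
  rw [Fintype.card_fin] at hmse
  rw [hmse, ← mul_pow, ← sq_abs]
  gcongr

/-- Variance-bias bound for the target-risk estimator, L1 version:
`E_D[(R_tar(f,D) - R(f))²] ≤ (1/n) Var_x[q_tarᵀL] + ℓ² (E_x‖q_tar - q*‖₁)²`. -/
theorem risk_estimate_bound_l1 {Ω α : Type*} [MeasurableSpace Ω] [MeasurableSpace α]
    (P : Measure Ω) [IsProbabilityMeasure P] (μ : Measure α) [IsProbabilityMeasure μ]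
    (n K : ℕ) (hn : 0 < n) (hK : 1 ≤ K)
    (X : Fin n → Ω → α) (hXmeas : ∀ i, Measurable (X i))
    (hiid : iIndepFun X P)
    (hdist : ∀ i, P.map (X i) = μ)
    (ℓ : ℝ) (hℓ : 0 ≤ ℓ)
    (qtar qstar L : α → Fin K → ℝ)
    (hqtar_meas : ∀ k, Measurable fun x => qtar x k)
    (hqstar_meas : ∀ k, Measurable fun x => qstar x k)
    (hL_meas : ∀ k, Measurable fun x => L x k)
    (hqtar_nonneg : ∀ x k, 0 ≤ qtar x k) (hqtar_sum : ∀ x, ∑ k, qtar x k = 1)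
    (hqstar_nonneg : ∀ x k, 0 ≤ qstar x k) (hqstar_sum : ∀ x, ∑ k, qstar x k = 1)
    (hLbound : ∀ x k, L x k ∈ Set.Icc (0 : ℝ) ℓ) :
    ∫ ω, ((n : ℝ)⁻¹ * (∑ i, ∑ k, qtar (X i ω) k * L (X i ω) k)
        - ∫ x, ∑ k, qstar x k * L x k ∂μ) ^ 2 ∂P
      ≤ (n : ℝ)⁻¹ * variance (fun x => ∑ k, qtar x k * L x k) μ
        + ℓ ^ 2 * (∫ x, ∑ k, |qtar x k - qstar x k| ∂μ) ^ 2 :=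
  risk_estimate_bound_l1_general P μ n K hn X hXmeas hiid hdist ℓ qtar qstar L hqtar_meas
    hqstar_meas hL_meas hqtar_nonneg hqtar_sum hqstar_nonneg hqstar_sum hLbound
end

section
/- In the gradient-ascent setting, for two classes i, j ∉ {y⁻} with p_i > p_j, the post-update ratio satisfies p'_i / p'_j > p_i / p_j (the rich get relatively richer). -/
/-- Softmax. -/
noncomputable def softmax {V : ℕ} (z : Fin V → ℝ) : Fin V → ℝ :=
  fun i => Real.exp (z i) / ∑ j, Real.exp (z j)

/-- One-hot vector of a label. -/
def oneHot {V : ℕ} (y : Fin V) : Fin V → ℝ := fun i => if i = y then 1 else 0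

lemma softmax_ratio {V : ℕ} (z : Fin V → ℝ) (i j : Fin V) :
    softmax z i / softmax z j = Real.exp (z i - z j) := by
  have hS : (0 : ℝ) < ∑ k, Real.exp (z k) :=
    Finset.sum_pos (fun k _ => Real.exp_pos _) ⟨i, Finset.mem_univ i⟩
  simp only [softmax]
  rw [Real.exp_sub]
  field_simp

lemma softmax_pos {V : ℕ} (z : Fin V → ℝ) (i : Fin V) : 0 < softmax z i := by
  have hS : (0 : ℝ) < ∑ k, Real.exp (z k) :=
    Finset.sum_pos (fun k _ => Real.exp_pos _) ⟨i, Finset.mem_univ i⟩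
  exact div_pos (Real.exp_pos _) hS

/-- "The rich get relatively richer": after the gradient-ascent update
`w' = w + η(p - e_{y⁻})hᵀ`, for classes `i, j ≠ y⁻` with `p_i > p_j`,
the ratio satisfies `p'_i / p'_j > p_i / p_j`. -/
theorem rich_get_richer {V d : ℕ}
    (w : Matrix (Fin V) (Fin d) ℝ) (h : Fin d → ℝ) (hh : h ≠ 0)
    (yneg : Fin V) (η : ℝ) (hη : 0 < η)
    (p : Fin V → ℝ) (hp : p = softmax (w.mulVec h))
    (w' : Matrix (Fin V) (Fin d) ℝ)
    (hw' : w' = w + η • Matrix.vecMulVec (p - oneHot yneg) h)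
    (p' : Fin V → ℝ) (hp' : p' = softmax (w'.mulVec h))
    (i j : Fin V) (hi : i ≠ yneg) (hj : j ≠ yneg) (hij : p i > p j) :
    p' i / p' j > p i / p j := by
  set z := w.mulVec h with hz
  set z' := w'.mulVec h with hz'
  -- norm squared of h positive
  have hnorm : 0 < ∑ t, h t * h t := by
    rcases Function.ne_iff.mp hh with ⟨t0, ht0⟩
    apply Finset.sum_pos' (fun t _ => mul_self_nonneg _)
    exact ⟨t0, Finset.mem_univ t0, mul_self_pos.mpr ht0⟩
  have hzk : ∀ k, z' k = z k + η * ((p - oneHot yneg) k) * (∑ t, h t * h t) := by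
    intro k
    simp only [hz', hw', Matrix.mulVec, dotProduct, Matrix.add_apply,
      Matrix.smul_apply, Matrix.vecMulVec_apply, smul_eq_mul, add_mul,
      Finset.sum_add_distrib, hz]
    rw [mul_assoc, Finset.mul_sum, Finset.mul_sum]
    congr 1
    exact Finset.sum_congr rfl (fun t _ => by ring)
  have hpi : (p - oneHot yneg) i = p i := by
    simp [oneHot, hi]
  have hpj : (p - oneHot yneg) j = p j := by
    simp [oneHot, hj]
  have hgt : z' i - z' j > z i - z j := by
    rw [hzk i, hzk j, hpi, hpj]
    have : 0 < η * (p i - p j) * (∑ t, h t * h t) := by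
      apply mul_pos (mul_pos hη (by linarith)) hnorm
    nlinarith
  rw [hp, hp', softmax_ratio, softmax_ratio]
  exact Real.exp_lt_exp.mpr hgt
end
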